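/- arXiv:1806.06520 — 3 statements merged into one kernel-verified Lean document; each statement's English description precedes it below -/
import Mathlib

section
/- With the setup of the perturbed Boltzmann–Gibbs transformation: for any bounded measurable φ : X → ℝ, |Ψμ(φ) − Ψ̂μ(φ)| ≤ (G(x̄)/(μ(G)+G(x̄))) · osc(φ), where osc(φ) = sup φ − inf φ. -/
open MeasureTheory

/-- `|Ψμ(φ) − Ψ̂μ(φ)| ≤ (G(x̄)/(μ(G)+G(x̄))) · osc(φ)` where `osc(φ) = sup φ − inf φ`. -/
theorem stmt1 {X : Type*} [MeasurableSpace X] [Nonempty X]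
    (μ : Measure X) [IsFiniteMeasure μ]
    (G φ : X → ℝ) (hGmeas : Measurable G) (hφmeas : Measurable φ)
    (hGnn : ∀ x, 0 ≤ G x) (hGb : ∃ C, ∀ x, G x ≤ C)
    (hφb : ∃ C, ∀ x, |φ x| ≤ C)
    (hμG : 0 < ∫ x, G x ∂μ) (xbar : X) :
    |(∫ x, G x * φ x ∂μ) / (∫ x, G x ∂μ)
        - ((∫ x, G x * φ x ∂μ) + G xbar * φ xbar) / ((∫ x, G x ∂μ) + G xbar)|
      ≤ (G xbar / ((∫ x, G x ∂μ) + G xbar)) * ((⨆ x, φ x) - (⨅ x, φ x)) := by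
  obtain ⟨C, hC⟩ := hGb
  obtain ⟨D, hD⟩ := hφb
  have hba : BddAbove (Set.range φ) := ⟨D, by rintro _ ⟨x, rfl⟩; exact (abs_le.mp (hD x)).2⟩
  have hbb : BddBelow (Set.range φ) := ⟨-D, by rintro _ ⟨x, rfl⟩; exact (abs_le.mp (hD x)).1⟩
  set s := ⨆ x, φ x with hs
  set i := ⨅ x, φ x with hi
  have hφs : ∀ x, φ x ≤ s := fun x => le_ciSup hba x
  have hφi : ∀ x, i ≤ φ x := fun x => ciInf_le hbb x
  have hGint : Integrable G μ := by
    refine ⟨hGmeas.aestronglyMeasurable, ?_⟩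
    apply HasFiniteIntegral.of_bounded (C := C)
    filter_upwards with x
    rw [Real.norm_eq_abs, abs_of_nonneg (hGnn x)]; exact hC x
  have hGφint : Integrable (fun x => G x * φ x) μ := by
    refine ⟨(hGmeas.mul hφmeas).aestronglyMeasurable, ?_⟩
    apply HasFiniteIntegral.of_bounded (C := C * D)
    filter_upwards with x
    rw [Real.norm_eq_abs, abs_mul, abs_of_nonneg (hGnn x)]
    exact mul_le_mul (hC x) (hD x) (abs_nonneg _) ((hGnn x).trans (hC x))
  set I := ∫ x, G x * φ x ∂μ with hI
  set J := ∫ x, G x ∂μ with hJ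
  set g := G xbar
  set p := φ xbar
  have hg : 0 ≤ g := hGnn xbar
  have hJg : 0 < J + g := by linarith
  have hIs : I ≤ s * J := by
    have : ∫ x, G x * φ x ∂μ ≤ ∫ x, G x * s ∂μ := by
      apply integral_mono hGφint (hGint.mul_const s)
      intro x
      exact mul_le_mul_of_nonneg_left (hφs x) (hGnn x)
    rw [integral_mul_const] at this
    rw [hI, hJ]; linarith
  have hIi : i * J ≤ I := by
    have : ∫ x, G x * i ∂μ ≤ ∫ x, G x * φ x ∂μ := by
      apply integral_mono (hGint.mul_const i) hGφint
      intro x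
      exact mul_le_mul_of_nonneg_left (hφi x) (hGnn x)
    rw [integral_mul_const] at this
    rw [hI, hJ]; linarith
  have hdiv_le : I / J ≤ s := (div_le_iff₀ hμG).mpr hIs
  have hdiv_ge : i ≤ I / J := (le_div_iff₀ hμG).mpr hIi
  have hps : p ≤ s := hφs xbar
  have hpi : i ≤ p := hφi xbar
  have hkey : I / J - (I + g * p) / (J + g) = (g / (J + g)) * (I / J - p) := by
    field_simp
    ring
  rw [hkey, abs_mul, abs_of_nonneg (div_nonneg hg hJg.le)]
  apply mul_le_mul_of_nonneg_left _ (div_nonneg hg hJg.le)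
  rw [abs_sub_le_iff]
  constructor <;> linarith
end

section
/- Let ν, μ be finite measures on X and let Q be a bounded nonnegative kernel-type operator, realized here as two nonnegative bounded measurable functions h, hf on X with |hf| ≤ h pointwise and μ(h) > 0, ν(h) > 0, representing Q(G) and Q(G f) for ‖f‖_∞ ≤ 1. Then for the residual term R = ((μ + ν)(hf)/(μ + ν)(h)) − (μ(hf)/μ(h)), one has |R| ≤ (ν(h)/(μ+ν)(h)) · osc(hf/h), where osc(g) = sup g − inf g on the support where h > 0. -/
/-!
Write `A/B` for `μ(hf)/μ(h)` and `C/D` for `ν(hf)/ν(h)`. The quotient `(A + C)/(B + D)` is the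
mediant of the two, and `(A + C)/(B + D) - A/B = D/(B + D) · (C/D - A/B)`. Since `hf = (hf/h) · h`
with `h ≥ 0`, both `A/B` and `C/D` lie between the infimum and the supremum of `hf/h`, so their
difference is at most the oscillation of `hf/h`.
-/

open MeasureTheory

theorem abs_mediant_sub_div_le {A B C D m M : ℝ} (hB : 0 < B) (hD : 0 ≤ D)
    (hA : m * B ≤ A ∧ A ≤ M * B) (hC : m * D ≤ C ∧ C ≤ M * D) :
    |(A + C) / (B + D) - A / B| ≤ D / (B + D) * (M - m) := by
  have hBD : 0 < B + D := by linarith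
  have hnum : |B * C - A * D| ≤ B * D * (M - m) := by
    rw [abs_le]
    constructor <;> nlinarith [hA.1, hA.2, hC.1, hC.2, mul_nonneg hB.le hD]
  calc |(A + C) / (B + D) - A / B| = |(B * C - A * D) / (B * (B + D))| := by
        congr 1
        field_simp
        ring
    _ = |B * C - A * D| / (B * (B + D)) := by rw [abs_div, abs_of_pos (mul_pos hB hBD)]
    _ ≤ B * D * (M - m) / (B * (B + D)) := by gcongr
    _ = D / (B + D) * (M - m) := by field_simp

theorem div_mul_cancel_of_abs_le {a b : ℝ} (hab : |a| ≤ b) : a / b * b = a := by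
  rcases eq_or_ne b 0 with rfl | hb
  · simp [abs_nonpos_iff.mp hab]
  · exact div_mul_cancel₀ a hb

theorem abs_div_le_one_of_abs_le {a b : ℝ} (hab : |a| ≤ b) : |a / b| ≤ 1 := by
  rw [abs_div]
  exact div_le_one_of_le₀ (hab.trans (le_abs_self b)) (abs_nonneg b)

section RatioBounds

variable {X : Type*} [MeasurableSpace X] {κ : Measure X} {h hf : X → ℝ}

theorem integral_le_iSup_div_mul_integral (hint : Integrable h κ) (hfint : Integrable hf κ)
    (hdom : ∀ x, |hf x| ≤ h x) :
    ∫ x, hf x ∂κ ≤ (⨆ x, hf x / h x) * ∫ x, h x ∂κ := by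
  have hbdd : BddAbove (Set.range fun x => hf x / h x) :=
    ⟨1, by rintro _ ⟨x, rfl⟩; exact (abs_le.mp (abs_div_le_one_of_abs_le (hdom x))).2⟩
  rw [← integral_const_mul]
  refine integral_mono hfint (hint.const_mul _) fun x => ?_
  calc hf x = hf x / h x * h x := (div_mul_cancel_of_abs_le (hdom x)).symm
    _ ≤ (⨆ y, hf y / h y) * h x :=
      mul_le_mul_of_nonneg_right (le_ciSup hbdd x) ((abs_nonneg _).trans (hdom x))

theorem iInf_div_mul_integral_le_integral (hint : Integrable h κ) (hfint : Integrable hf κ)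
    (hdom : ∀ x, |hf x| ≤ h x) :
    (⨅ x, hf x / h x) * ∫ x, h x ∂κ ≤ ∫ x, hf x ∂κ := by
  have hbdd : BddBelow (Set.range fun x => hf x / h x) :=
    ⟨-1, by rintro _ ⟨x, rfl⟩; exact (abs_le.mp (abs_div_le_one_of_abs_le (hdom x))).1⟩
  rw [← integral_const_mul]
  refine integral_mono (hint.const_mul _) hfint fun x => ?_
  calc (⨅ y, hf y / h y) * h x ≤ hf x / h x * h x :=
        mul_le_mul_of_nonneg_right (ciInf_le hbdd x) ((abs_nonneg _).trans (hdom x))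
    _ = hf x := div_mul_cancel_of_abs_le (hdom x)

end RatioBounds

theorem stmt2_general {X : Type*} [MeasurableSpace X]
    (μ ν : Measure X) [IsFiniteMeasure μ] [IsFiniteMeasure ν]
    (h hf : X → ℝ) (hmeas : Measurable h) (hfmeas : Measurable hf)
    (hbdd : ∃ C, ∀ x, h x ≤ C)
    (hdom : ∀ x, |hf x| ≤ h x)
    (hμh : 0 < ∫ x, h x ∂μ) :
    |((∫ x, hf x ∂μ) + (∫ x, hf x ∂ν)) / ((∫ x, h x ∂μ) + (∫ x, h x ∂ν))
        - (∫ x, hf x ∂μ) / (∫ x, h x ∂μ)|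
      ≤ ((∫ x, h x ∂ν) / ((∫ x, h x ∂μ) + (∫ x, h x ∂ν)))
          * ((⨆ x, hf x / h x) - (⨅ x, hf x / h x)) := by
  obtain ⟨C, hC⟩ := hbdd
  have hnonneg : ∀ x, 0 ≤ h x := fun x => (abs_nonneg _).trans (hdom x)
  have hbounds : ∀ (κ : Measure X) [IsFiniteMeasure κ],
      (⨅ x, hf x / h x) * ∫ x, h x ∂κ ≤ ∫ x, hf x ∂κ ∧
        ∫ x, hf x ∂κ ≤ (⨆ x, hf x / h x) * ∫ x, h x ∂κ := by
    intro κ _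
    have hint : Integrable h κ := .of_bound hmeas.aestronglyMeasurable C
      (ae_of_all _ fun x => by rw [Real.norm_of_nonneg (hnonneg x)]; exact hC x)
    have hfint : Integrable hf κ := hint.mono' hfmeas.aestronglyMeasurable (ae_of_all _ hdom)
    exact ⟨iInf_div_mul_integral_le_integral hint hfint hdom,
      integral_le_iSup_div_mul_integral hint hfint hdom⟩
  exact abs_mediant_sub_div_le hμh (integral_nonneg hnonneg) (hbounds μ) (hbounds ν)

/-- Residual bound: `|((μ+ν)(hf)/(μ+ν)(h)) − μ(hf)/μ(h)| ≤ (ν(h)/(μ+ν)(h)) · osc(hf/h)`. -/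
theorem stmt2 {X : Type*} [MeasurableSpace X] [Nonempty X]
    (μ ν : Measure X) [IsFiniteMeasure μ] [IsFiniteMeasure ν]
    (h hf : X → ℝ) (hmeas : Measurable h) (hfmeas : Measurable hf)
    (hpos : ∀ x, 0 < h x) (hbdd : ∃ C, ∀ x, h x ≤ C)
    (hdom : ∀ x, |hf x| ≤ h x)
    (hμh : 0 < ∫ x, h x ∂μ) (hνh : 0 < ∫ x, h x ∂ν) :
    |((∫ x, hf x ∂μ) + (∫ x, hf x ∂ν)) / ((∫ x, h x ∂μ) + (∫ x, h x ∂ν))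
        - (∫ x, hf x ∂μ) / (∫ x, h x ∂μ)|
      ≤ ((∫ x, h x ∂ν) / ((∫ x, h x ∂μ) + (∫ x, h x ∂ν)))
          * ((⨆ x, hf x / h x) - (⨅ x, hf x / h x)) :=
  stmt2_general μ ν h hf hmeas hfmeas hbdd hdom hμh
end

section
/- Let X^1,...,X^N (N ≥ 2) be i.i.d. from a probability measure ν on X, and let h : X → ℝ be measurable with 0 < h ≤ M pointwise and ν(h) > 0, and let b ≥ 0 with b ≤ M (the conditional-path weight). Then for each i, E[ h(X^i) / (Σ_{j=1}^N h(X^j) + b) ] ≥ (1/(N−1)) · ν(h) / (ν(h) + (2M)/(N−1)). -/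
/-!
Write `A = h(Xⁱ)` and `T = Σ_{j ≠ i} h(Xʲ)`, so that `A` and `T` are independent and
`E T = (N - 1) ν(h)`. Since `t ↦ A / (A + b + t)` is convex, it lies above its tangent line at
`t = E T`; the linear term of the tangent line has mean zero by independence, which yields
Jensen's inequality `E[A / (A + b + T)] ≥ E[A / (A + b + E T)]`. Finally `A + b ≤ 2M`.
-/

open MeasureTheory ProbabilityTheory Finset

lemma div_sub_div_sq_mul_le_div {a c s t : ℝ} (ha : 0 ≤ a) (hs : 0 < c + s) (ht : 0 < c + t) :
    a / (c + s) - a / (c + s) ^ 2 * (t - s) ≤ a / (c + t) := by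
  have hgap : a / (c + t) - (a / (c + s) - a / (c + s) ^ 2 * (t - s))
      = a * (t - s) ^ 2 / ((c + s) ^ 2 * (c + t)) := by
    field_simp
    ring
  have : 0 ≤ a * (t - s) ^ 2 / ((c + s) ^ 2 * (c + t)) := by positivity
  linarith

section

variable {Ω : Type*} [MeasurableSpace Ω] {P : Measure Ω}

lemma integrable_div_of_nonneg_of_le [IsFiniteMeasure P] {f g : Ω → ℝ}
    (hf : AEMeasurable f P) (hg : AEMeasurable g P) (hf0 : ∀ ω, 0 ≤ f ω)
    (hfg : ∀ ω, f ω ≤ g ω) : Integrable (fun ω => f ω / g ω) P := by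
  refine .of_bound (hf.div hg).aestronglyMeasurable 1 (.of_forall fun ω => ?_)
  rw [Real.norm_eq_abs, abs_of_nonneg (div_nonneg (hf0 ω) ((hf0 ω).trans (hfg ω)))]
  exact div_le_one_of_le₀ (hfg ω) ((hf0 ω).trans (hfg ω))

lemma integral_div_le_integral_div_of_le [IsFiniteMeasure P] {f g : Ω → ℝ} {K : ℝ}
    (hf : Integrable f P) (hg : AEMeasurable g P) (hf0 : ∀ ω, 0 ≤ f ω) (hg0 : ∀ ω, 0 < g ω)
    (hfg : ∀ ω, f ω ≤ g ω) (hgK : ∀ ω, g ω ≤ K) :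
    (∫ ω, f ω ∂P) / K ≤ ∫ ω, f ω / g ω ∂P := by
  rw [← integral_div]
  exact integral_mono (hf.div_const K)
    (integrable_div_of_nonneg_of_le hf.aemeasurable hg hf0 hfg)
    fun ω => div_le_div_of_nonneg_left (hf0 ω) (hg0 ω) (hgK ω)

lemma integral_div_add_integral_le_integral_div_add [IsProbabilityMeasure P] {A T : Ω → ℝ}
    (hA : AEMeasurable A P) (hAT : IndepFun A T P) (hApos : ∀ ω, 0 < A ω)
    (hT0 : ∀ ω, 0 ≤ T ω) (hT : Integrable T P) (hmean : 0 < P[T]) {b : ℝ} (hb : 0 ≤ b) :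
    ∫ ω, A ω / (A ω + b + P[T]) ∂P ≤ ∫ ω, A ω / (A ω + b + T ω) ∂P := by
  set s := P[T]
  set slope : ℝ → ℝ := fun a => a / (a + b + s) ^ 2
  have hslope : Measurable slope := by fun_prop
  have hslope_le : ∀ ω, ‖slope (A ω)‖ ≤ 1 / s := by
    intro ω
    have hA0 := hApos ω
    rw [Real.norm_eq_abs, abs_of_nonneg (by positivity), div_le_div_iff₀ (by positivity) hmean]
    nlinarith [mul_pos hA0 hmean]
  have hlinear_int : Integrable (fun ω => slope (A ω) * (T ω - s)) P :=
    (hT.sub (integrable_const s)).bdd_mul (hslope.comp_aemeasurable hA).aestronglyMeasurable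
      (Filter.Eventually.of_forall hslope_le)
  have hlinear : ∫ ω, slope (A ω) * (T ω - s) ∂P = 0 := by
    have hprod :=
      (hAT.comp hslope (measurable_id.sub_const s)).integral_fun_mul_eq_mul_integral
        (hslope.comp_aemeasurable hA).aestronglyMeasurable
        (hT.sub (integrable_const s)).aestronglyMeasurable
    simp only [Function.comp_apply, id] at hprod
    rw [hprod]
    simp [integral_sub hT (integrable_const s), s]
  have hTm := hT.aemeasurable
  have hleft : Integrable (fun ω => A ω / (A ω + b + s)) P :=
    integrable_div_of_nonneg_of_le hA (by fun_prop) (fun ω => (hApos ω).le) fun ω => by linarith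
  calc ∫ ω, A ω / (A ω + b + s) ∂P
      = ∫ ω, (A ω / (A ω + b + s) - slope (A ω) * (T ω - s)) ∂P := by
        rw [integral_sub hleft hlinear_int, hlinear, sub_zero]
    _ ≤ ∫ ω, A ω / (A ω + b + T ω) ∂P := by
        refine integral_mono (hleft.sub hlinear_int)
          (integrable_div_of_nonneg_of_le hA (by fun_prop) (fun ω => (hApos ω).le)
            fun ω => by linarith [hT0 ω]) fun ω => ?_
        exact div_sub_div_sq_mul_le_div (hApos ω).le (by linarith [hApos ω])
          (by linarith [hApos ω, hT0 ω])

lemma ProbabilityTheory.iIndepFun.indepFun_comp_sum_erase {ι X : Type*} [Fintype ι]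
    [DecidableEq ι] [MeasurableSpace X] {Xs : ι → Ω → X} (hindep : iIndepFun Xs P)
    (hmeas : ∀ i, Measurable (Xs i)) {f : X → ℝ} (hf : Measurable f) (i : ι) :
    IndepFun (fun ω => f (Xs i ω)) (fun ω => ∑ j ∈ univ.erase i, f (Xs j ω)) P := by
  have := (hindep.comp (fun _ => f) fun _ => hf).indepFun_finsetSum_of_notMem
    (fun j => hf.comp (hmeas j)) (notMem_erase i univ)
  simpa only [sum_fn, Function.comp_def] using this.symm

lemma integral_sum_erase_comp_of_map_eq {ι X : Type*} [Fintype ι] [DecidableEq ι]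
    [MeasurableSpace X] {ν : Measure X} {Xs : ι → Ω → X} (hmeas : ∀ i, Measurable (Xs i))
    (hlaw : ∀ i, P.map (Xs i) = ν) {f : X → ℝ} (hf : Integrable f ν) (i : ι) :
    ∫ ω, ∑ j ∈ univ.erase i, f (Xs j ω) ∂P = (Fintype.card ι - 1 : ℝ) * ∫ x, f x ∂ν := by
  have hmean : ∀ j, ∫ ω, f (Xs j ω) ∂P = ∫ x, f x ∂ν := fun j => by
    rw [← integral_map (hmeas j).aemeasurable (hlaw j ▸ hf.aestronglyMeasurable), hlaw j]
  rw [integral_finsetSum _ fun j _ => (hlaw j ▸ hf).comp_measurable (hmeas j)]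
  simp only [hmean, sum_const, card_erase_of_mem (mem_univ i), card_univ, nsmul_eq_mul]
  rw [Nat.cast_pred (Fintype.card_pos_iff.2 ⟨i⟩)]

end

/-- Jensen step: for i.i.d. `X^1,…,X^N` from `ν`, `0 < h ≤ M`, `0 ≤ b ≤ M`,
`E[h(X^i)/(Σ_j h(X^j)+b)] ≥ (1/(N−1))·ν(h)/(ν(h)+2M/(N−1))`. -/
theorem stmt7 {Ω X : Type*} [MeasurableSpace Ω] [MeasurableSpace X]
    (P : Measure Ω) [IsProbabilityMeasure P]
    (ν : Measure X) [IsProbabilityMeasure ν]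
    (N : ℕ) (hN : 2 ≤ N)
    (Xs : Fin N → Ω → X) (hmeas : ∀ i, Measurable (Xs i))
    (hindep : iIndepFun (m := fun _ : Fin N => (inferInstance : MeasurableSpace X)) Xs P)
    (hlaw : ∀ i, Measure.map (Xs i) P = ν)
    (h : X → ℝ) (hh : Measurable h)
    (M : ℝ) (hpos : ∀ x, 0 < h x) (hb : ∀ x, h x ≤ M)
    (hνh : 0 < ∫ x, h x ∂ν)
    (b : ℝ) (hb0 : 0 ≤ b) (hbM : b ≤ M) :
    ∀ i : Fin N,
      (1 / ((N:ℝ) - 1)) * (∫ x, h x ∂ν) / ((∫ x, h x ∂ν) + 2 * M / ((N:ℝ) - 1))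
        ≤ ∫ ω, h (Xs i ω) / ((∑ j, h (Xs j ω)) + b) ∂P := by
  intro i
  have hhν : Integrable h ν :=
    .of_bound hh.aestronglyMeasurable M
      (.of_forall fun x => by simpa [abs_of_pos (hpos x)] using hb x)
  have hmean : ∫ ω, h (Xs i ω) ∂P = ∫ x, h x ∂ν := by
    rw [← integral_map (hmeas i).aemeasurable hh.aestronglyMeasurable, hlaw i]
  set m := ∫ x, h x ∂ν
  have hM : 0 < M := hνh.trans_le (by simpa using integral_mono hhν (integrable_const M) hb)
  have hN1 : (0 : ℝ) < N - 1 := by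
    have : (2 : ℝ) ≤ N := by exact_mod_cast hN
    linarith
  set A : Ω → ℝ := fun ω => h (Xs i ω)
  set T : Ω → ℝ := fun ω => ∑ j ∈ univ.erase i, h (Xs j ω)
  have hTmean : P[T] = (N - 1) * m := by
    simpa only [Fintype.card_fin] using integral_sum_erase_comp_of_map_eq hmeas hlaw hhν i
  have hjensen := integral_div_add_integral_le_integral_div_add (A := A)
    (hh.comp (hmeas i)).aemeasurable (hindep.indepFun_comp_sum_erase hmeas hh i)
    (fun ω => hpos _) (fun ω => sum_nonneg fun j _ => (hpos _).le)
    (integrable_finsetSum _ fun j _ => (hlaw j ▸ hhν).comp_measurable (hmeas j))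
    (hTmean ▸ mul_pos hN1 hνh) hb0
  have hdrop := integral_div_le_integral_div_of_le (K := 2 * M + (N - 1) * m)
    (g := fun ω => A ω + b + (N - 1) * m) ((hlaw i ▸ hhν).comp_measurable (hmeas i))
    (by fun_prop) (fun ω => (hpos _).le) (fun ω => by linarith [hpos (Xs i ω), mul_pos hN1 hνh])
    (fun ω => by linarith [mul_pos hN1 hνh]) fun ω => by linarith [hb (Xs i ω)]
  calc (1 / ((N:ℝ) - 1)) * m / (m + 2 * M / ((N:ℝ) - 1)) = m / (2 * M + (N - 1) * m) := by
        have : 0 < m + 2 * M / ((N:ℝ) - 1) := by positivity [div_pos (mul_pos two_pos hM) hN1]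
        field_simp
        ring
    _ ≤ ∫ ω, A ω / (A ω + b + T ω) ∂P := (hmean ▸ hdrop).trans (hTmean ▸ hjensen)
    _ = ∫ ω, h (Xs i ω) / ((∑ j, h (Xs j ω)) + b) ∂P := by
        congr 1 with ω
        simp only [A, T, ← add_sum_erase _ _ (mem_univ i)]
        ring
end
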